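/- Let ε > 0 and T > 0. Let ū : [0,T] × [-1,1] → ℝ be such that ū, ∂tū, ∂xū, ∂x²ū and ∂t∂xū exist and are jointly continuous, with ū(t,±1) = ∂xū(t,±1) = 0 and ū(t,x) > -1 for all (t,x). Let D := { (t,x,z) : t ∈ [0,T], (x,z) ∈ closure(Ω(ū(t,·))) } and let ψ : D → ℝ extend to a twice continuously differentiable function on an open neighborhood of D in ℝ³, such that for each t ∈ [0,T], ψ(t,·,·) satisfies ε²∂x²ψ + ∂z²ψ = 0 in Ω(ū(t,·)) and ψ(t,x,z) = (1+z)/(1+ū(t,x)) for (x,z) ∈ ∂Ω(ū(t,·)). Define E_e(t) := ∫_{Ω(ū(t,·))} ( ε²|∂xψ(t,x,z)|² + |∂zψ(t,x,z)|² ) d(x,z). Then for all 0 ≤ t₁ ≤ t₂ ≤ T: E_e(t₂) − E_e(t₁) = − ∫_{t₁}^{t₂} ∫_{-1}^{1} ( ε² |∂xψ(s,x,ū(s,x))|² + |∂zψ(s,x,ū(s,x))|² ) ∂tū(s,x) dx ds. -/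

import Mathlib

/-
Write `E(t) = ∫_{-1}^{1} ∫_{-1}^{ū(t,x)} g dz dx` with `g = ε²ψ_x² + ψ_z²`. The Leibniz rule gives
`E' = ∫ g(x, ū) ∂tū dx + ∫∫ ∂t g`. Since mixed partials commute and `ε²ψ_xx + ψ_zz = 0`,
`∂t g = 2 div (∂tψ · (ε²ψ_x, ψ_z))`, so the bulk term is a boundary integral over `∂Ω`. On the
bottom and on the walls the boundary values of `ψ` do not depend on `t`, so `∂tψ = 0` there; on
the top `ψ(t, x, ū(t,x)) = 1`, whence `∂tψ = -ψ_z ∂tū` and `ψ_x = -ψ_z ∂xū`, and the boundary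
integral equals `-2 ∫ g(x, ū) ∂tū dx`. Thus `E' = -∫ g(x, ū) ∂tū dx`; integrate in time.
-/

open MeasureTheory Set

/-- The domain `Ω(v) = {(x,z) : -1 < x < 1, -1 < z < v(x)}`. -/
def Omega (v : ℝ → ℝ) : Set (ℝ × ℝ) :=
  {p | p.1 ∈ Ioo (-1 : ℝ) 1 ∧ p.2 ∈ Ioo (-1 : ℝ) (v p.1)}

/-- Partial derivative of a curried two-variable function with respect to the
first variable. -/
noncomputable def pdx (f : ℝ → ℝ → ℝ) (x z : ℝ) : ℝ := deriv (fun x' => f x' z) x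

/-- Partial derivative of a curried two-variable function with respect to the
second variable. -/
noncomputable def pdz (f : ℝ → ℝ → ℝ) (x z : ℝ) : ℝ := deriv (f x) z

/-- The electrostatic energy
`E_e = ∫_{Ω(v)} ( ε²|∂xψ|² + |∂zψ|² )` of a potential `ψ` on `Ω(v)`. -/
noncomputable def Ee (ε : ℝ) (v : ℝ → ℝ) (ψ : ℝ → ℝ → ℝ) : ℝ :=
  ∫ p in Omega v, (ε ^ 2 * (pdx ψ p.1 p.2) ^ 2 + (pdz ψ p.1 p.2) ^ 2)

open Filter Topology Function

section ParametricIntegral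

variable {f f' : ℝ → ℝ → ℝ}

theorem hasDerivAt_intervalIntegral_of_continuous (hf : Continuous ↿f) (hf' : Continuous ↿f')
    (hd : ∀ t z, HasDerivAt (f · z) (f' t z) t) (a b t₀ : ℝ) :
    HasDerivAt (fun t => ∫ z in a..b, f t z) (∫ z in a..b, f' t₀ z) t₀ := by
  obtain ⟨C, hC⟩ := ((isCompact_closedBall t₀ 1).prod (isCompact_uIcc (a := a) (b := b))
    ).exists_bound_of_continuousOn hf'.continuousOn
  refine (intervalIntegral.hasDerivAt_integral_of_dominated_loc_of_deriv_le
    (bound := fun _ => C) (Metric.ball_mem_nhds t₀ one_pos) ?_ ?_ ?_ ?_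
    intervalIntegrable_const ?_).2
  · exact .of_forall fun t => (hf.comp (.prodMk_right t)).aestronglyMeasurable
  · exact (hf.comp (.prodMk_right t₀)).intervalIntegrable a b
  · exact (hf'.comp (.prodMk_right t₀)).aestronglyMeasurable
  · exact .of_forall fun z hz t ht =>
      hC (t, z) ⟨Metric.ball_subset_closedBall ht, uIoc_subset_uIcc hz⟩
  · exact .of_forall fun z _ t _ => hd t z

theorem hasDerivAt_intervalIntegral_comp_upper (hf : Continuous ↿f) (hf' : Continuous ↿f')
    (hd : ∀ t z, HasDerivAt (f · z) (f' t z) t) {a : ℝ → ℝ} {a' t₀ : ℝ}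
    (ha : HasDerivAt a a' t₀) (c : ℝ) :
    HasDerivAt (fun t => ∫ z in c..a t, f t z)
      (f t₀ (a t₀) * a' + ∫ z in c..a t₀, f' t₀ z) t₀ := by
  have hΦ := hasStrictFDerivAt_uncurry_coprod (u := (t₀, a t₀))
    (f := fun t b => ∫ z in c..b, f t z)
    (f₁ := fun t b => (1 : ℝ →L[ℝ] ℝ).smulRight (∫ z in c..b, f' t z))
    (f₂ := fun t b => (1 : ℝ →L[ℝ] ℝ).smulRight (f t b))
    (.of_forall fun p =>
      (hasDerivAt_intervalIntegral_of_continuous hf hf' hd c p.2 p.1).hasFDerivAt)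
    (.of_forall fun p => (intervalIntegral.integral_hasDerivAt_right
      ((hf.comp (.prodMk_right p.1)).intervalIntegrable _ _)
      ((hf.comp (.prodMk_right p.1)).stronglyMeasurableAtFilter _ _)
      (hf.comp (.prodMk_right p.1)).continuousAt).hasFDerivAt)
    ((ContinuousLinearMap.smulRightL ℝ ℝ ℝ 1).continuous.comp
      (intervalIntegral.continuous_parametric_primitive_of_continuous
        (μ := volume) (a₀ := c) hf')).continuousAt
    ((ContinuousLinearMap.smulRightL ℝ ℝ ℝ 1).continuous.comp hf).continuousAt
  refine (hΦ.hasFDerivAt.comp_hasDerivAt t₀ ((hasDerivAt_id t₀).prodMk ha)).congr_deriv ?_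
  change (1 : ℝ) • (∫ z in c..a t₀, f' t₀ z) + a' • f t₀ (a t₀) = _
  rw [one_smul, smul_eq_mul, add_comm, mul_comm]

theorem integral_integral_subgraph_divergence {P P' Q Q' : ℝ → ℝ → ℝ} {u u' : ℝ → ℝ}
    (hP : Continuous ↿P) (hP' : Continuous ↿P') (hQ : Continuous ↿Q) (hQ' : Continuous ↿Q')
    (hPd : ∀ x z, HasDerivAt (P · z) (P' x z) x) (hQd : ∀ x z, HasDerivAt (Q x) (Q' x z) z)
    (hu : ∀ x, HasDerivAt u (u' x) x) (hu' : Continuous u') (a b c : ℝ) :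
    ∫ x in a..b, ∫ z in c..u x, (P' x z + Q' x z) =
      (∫ z in c..u b, P b z) - (∫ z in c..u a, P a z)
        + ∫ x in a..b, (Q x (u x) - Q x c - P x (u x) * u' x) := by
  have hu_cont : Continuous u := continuous_iff_continuousAt.2 fun x => (hu x).continuousAt
  have hP_top : Continuous fun x => P x (u x) := hP.comp (continuous_id.prodMk hu_cont)
  have hW' : Continuous fun x => P x (u x) * u' x + ∫ z in c..u x, P' x z :=
    (hP_top.mul hu').add
      (intervalIntegral.continuous_parametric_intervalIntegral_of_continuous hP' hu_cont)
  have hR : Continuous fun x => Q x (u x) - Q x c - P x (u x) * u' x :=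
    ((hQ.comp (continuous_id.prodMk hu_cont)).sub
      (hQ.comp (continuous_id.prodMk continuous_const))).sub (hP_top.mul hu')
  have hinner (x : ℝ) : ∫ z in c..u x, (P' x z + Q' x z) =
      (∫ z in c..u x, P' x z) + (Q x (u x) - Q x c) := by
    have hP'x : Continuous (P' x) := hP'.comp (.prodMk_right x)
    have hQ'x : Continuous (Q' x) := hQ'.comp (.prodMk_right x)
    rw [intervalIntegral.integral_add (hP'x.intervalIntegrable _ _) (hQ'x.intervalIntegrable _ _),
      intervalIntegral.integral_eq_sub_of_hasDerivAt (fun z _ => hQd x z)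
        (hQ'x.intervalIntegrable _ _)]
  have hflux : ∫ x in a..b, (P x (u x) * u' x + ∫ z in c..u x, P' x z) =
      (∫ z in c..u b, P b z) - (∫ z in c..u a, P a z) :=
    intervalIntegral.integral_eq_sub_of_hasDerivAt
      (fun x _ => hasDerivAt_intervalIntegral_comp_upper hP hP' hPd (hu x) c)
      (hW'.intervalIntegrable _ _)
  rw [← hflux, ← intervalIntegral.integral_add (hW'.intervalIntegrable _ _)
    (hR.intervalIntegrable _ _)]
  simp only [hinner]
  congr 1 with x
  ring

theorem continuous_integral_integral_subgraph {g : ℝ × ℝ × ℝ → ℝ} {u : ℝ → ℝ → ℝ}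
    (hg : Continuous g) (hu : Continuous ↿u) (a b c : ℝ) :
    Continuous fun t => ∫ x in a..b, ∫ z in c..u t x, g (t, x, z) :=
  intervalIntegral.continuous_parametric_intervalIntegral_of_continuous'
    (intervalIntegral.continuous_parametric_intervalIntegral_of_continuous
      (f := fun p z => g (p.1, p.2, z)) (hg.comp (by fun_prop)) hu) a b

theorem hasDerivAt_integral_integral_subgraph {g g' : ℝ × ℝ × ℝ → ℝ} {u u' : ℝ → ℝ → ℝ}
    (hg : Continuous g) (hg' : Continuous g')
    (hgd : ∀ t x z, HasDerivAt (fun s => g (s, x, z)) (g' (t, x, z)) t)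
    (hu : Continuous ↿u) (hu' : Continuous ↿u') (hud : ∀ t x, HasDerivAt (u · x) (u' t x) t)
    (a b c t₀ : ℝ) :
    HasDerivAt (fun t => ∫ x in a..b, ∫ z in c..u t x, g (t, x, z))
      ((∫ x in a..b, g (t₀, x, u t₀ x) * u' t₀ x)
        + ∫ x in a..b, ∫ z in c..u t₀ x, g' (t₀, x, z)) t₀ := by
  have hflux : Continuous fun p : ℝ × ℝ => g (p.1, p.2, u p.1 p.2) * u' p.1 p.2 :=
    (hg.comp (by fun_prop : Continuous fun p : ℝ × ℝ => (p.1, p.2, u p.1 p.2))).mul hu'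
  have hbulk : Continuous fun p : ℝ × ℝ => ∫ z in c..u p.1 p.2, g' (p.1, p.2, z) :=
    intervalIntegral.continuous_parametric_intervalIntegral_of_continuous
      (f := fun p z => g' (p.1, p.2, z)) (hg'.comp (by fun_prop)) hu
  rw [← intervalIntegral.integral_add (f := fun x => g (t₀, x, u t₀ x) * u' t₀ x)
    (g := fun x => ∫ z in c..u t₀ x, g' (t₀, x, z))
    ((hflux.comp (.prodMk_right t₀)).intervalIntegrable _ _)
    ((hbulk.comp (.prodMk_right t₀)).intervalIntegrable _ _)]
  exact hasDerivAt_intervalIntegral_of_continuous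
    (intervalIntegral.continuous_parametric_intervalIntegral_of_continuous
      (f := fun p z => g (p.1, p.2, z)) (hg.comp (by fun_prop)) hu) (hflux.add hbulk)
    (fun t x => hasDerivAt_intervalIntegral_comp_upper
      (f := fun s z => g (s, x, z)) (hg.comp (by fun_prop)) (hg'.comp (by fun_prop))
      (fun s z => hgd s x z) (hud t x) c) a b t₀

end ParametricIntegral

section Omega

theorem setIntegral_regionBetween {α E : Type*} [MeasurableSpace α] [NormedAddCommGroup E]
    [NormedSpace ℝ E] {μ : Measure α} [SFinite μ] {f g : α → ℝ} {s : Set α}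
    (hf : Measurable f) (hg : Measurable g) (hs : MeasurableSet s) {G : α × ℝ → E}
    (hG : IntegrableOn G (regionBetween f g s) (μ.prod volume)) :
    ∫ p in regionBetween f g s, G p ∂μ.prod volume =
      ∫ x in s, (∫ z in Ioo (f x) (g x), G (x, z)) ∂μ := by
  have hm := measurableSet_regionBetween hf hg hs
  rw [← integral_indicator hm, integral_prod _ ((integrable_indicator_iff hm).2 hG),
    ← integral_indicator hs]
  congr 1 with x
  by_cases hx : x ∈ s
  · rw [indicator_of_mem hx, ← integral_indicator measurableSet_Ioo]
    congr 1 with z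
    simp [regionBetween, indicator, hx]
  · simp [regionBetween, indicator, hx]

theorem isOpen_Omega {v : ℝ → ℝ} (hv : Continuous v) : IsOpen (Omega v) :=
  (isOpen_Ioo.preimage continuous_fst).inter <|
    (isOpen_lt (continuous_const (y := (-1 : ℝ))) continuous_snd).inter
      (isOpen_lt continuous_snd (hv.comp continuous_fst))

theorem setIntegral_Omega {v : ℝ → ℝ} (hv : Continuous v) (hv1 : ∀ x ∈ Ioo (-1 : ℝ) 1, -1 ≤ v x)
    {G : ℝ × ℝ → ℝ} (hG : Continuous G) :
    ∫ p in Omega v, G p = ∫ x in (-1 : ℝ)..1, ∫ z in (-1 : ℝ)..v x, G (x, z) := by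
  obtain ⟨R, hR⟩ := (isCompact_Icc (a := (-1 : ℝ)) (b := 1)).bddAbove_image hv.continuousOn
  have hsub : Omega v ⊆ Icc (-1) 1 ×ˢ Icc (-1) R := fun p hp =>
    ⟨Ioo_subset_Icc_self hp.1, hp.2.1.le,
      hp.2.2.le.trans (hR (mem_image_of_mem v (Ioo_subset_Icc_self hp.1)))⟩
  have hint : IntegrableOn G (regionBetween (fun _ => -1) v (Ioo (-1) 1)) (volume.prod volume) :=
    (hG.continuousOn.integrableOn_compact (isCompact_Icc.prod isCompact_Icc)).mono_set hsub
  rw [Measure.volume_eq_prod, show Omega v = regionBetween (fun _ => -1) v (Ioo (-1) 1) from rfl,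
    setIntegral_regionBetween measurable_const hv.measurable measurableSet_Ioo hint,
    intervalIntegral.integral_of_le (by norm_num), integral_Ioc_eq_integral_Ioo]
  refine setIntegral_congr_fun measurableSet_Ioo fun x hx => ?_
  rw [intervalIntegral.integral_of_le (hv1 x hx), integral_Ioc_eq_integral_Ioo]

theorem mem_closure_Omega {v : ℝ → ℝ} (hv : Continuous v) (hv1 : ∀ x ∈ Icc (-1 : ℝ) 1, -1 < v x)
    {x z : ℝ} (hx : x ∈ Icc (-1 : ℝ) 1) (hz : z ∈ Icc (-1) (v x)) :
    (x, z) ∈ closure (Omega v) := by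
  have hvx := hv1 x hx
  set w := (z + 1) / (v x + 1)
  have hw0 : 0 ≤ w := div_nonneg (by linarith [hz.1]) (by linarith)
  have hw1 : w ≤ 1 := (div_le_one (by linarith)).2 (by linarith [hz.2])
  -- for `0 < l < 1` the relative height `l * w + (1 - l) / 2` of `γ l` lies in `(0, 1)`
  let γ : ℝ → ℝ × ℝ := fun l => (l * x, -1 + (l * w + (1 - l) / 2) * (v (l * x) + 1))
  have hγ1 : γ 1 = (x, z) := by
    simp only [γ, one_mul, sub_self, zero_div, add_zero, w]
    rw [div_mul_cancel₀ _ (by linarith)]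
    exact Prod.ext rfl (by ring)
  rw [← hγ1]
  refine mem_closure_of_tendsto (((by fun_prop : Continuous γ).tendsto 1).mono_left
    (nhdsWithin_le_nhds (s := Iio 1))) ?_
  filter_upwards [Ioo_mem_nhdsLT zero_lt_one] with l ⟨hl0, hl1⟩
  have hlx : l * x ∈ Ioo (-1) 1 := ⟨by nlinarith [hx.1], by nlinarith [hx.2]⟩
  have hv' : 0 < v (l * x) + 1 := by linarith [hv1 _ (Ioo_subset_Icc_self hlx)]
  have hθ0 : 0 < l * w + (1 - l) / 2 := by nlinarith
  have hθ1 : l * w + (1 - l) / 2 < 1 := by nlinarith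
  refine ⟨hlx, ?_, ?_⟩ <;> dsimp only [γ] <;>
    nlinarith [mul_pos hθ0 hv', mul_lt_mul_of_pos_right hθ1 hv']

theorem mem_frontier_Omega {v : ℝ → ℝ} (hv : Continuous v) (hv1 : ∀ x ∈ Icc (-1 : ℝ) 1, -1 < v x)
    {x z : ℝ} (hx : x ∈ Icc (-1 : ℝ) 1) (hz : z ∈ Icc (-1) (v x)) (hp : (x, z) ∉ Omega v) :
    (x, z) ∈ frontier (Omega v) := by
  rw [(isOpen_Omega hv).frontier_eq]
  exact ⟨mem_closure_Omega hv hv1 hx hz, hp⟩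

theorem boundary_values_of_frontier_Omega {v : ℝ → ℝ} {φ : ℝ → ℝ → ℝ} (hv : Continuous v)
    (hv1 : ∀ x ∈ Icc (-1 : ℝ) 1, -1 < v x) (hv_wall : v (-1) = 0 ∧ v 1 = 0)
    (hbc : ∀ p ∈ frontier (Omega v), φ p.1 p.2 = (1 + p.2) / (1 + v p.1)) :
    (∀ x ∈ Ioo (-1 : ℝ) 1, φ x (v x) = 1 ∧ φ x (-1) = 0) ∧
      ∀ z ∈ Ioo (-1 : ℝ) 0, φ (-1) z = 1 + z ∧ φ 1 z = 1 + z := by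
  have hbd {x z : ℝ} (hx : x ∈ Icc (-1 : ℝ) 1) (hz : z ∈ Icc (-1) (v x))
      (hp : (x, z) ∉ Omega v) : φ x z = (1 + z) / (1 + v x) :=
    hbc (x, z) (mem_frontier_Omega hv hv1 hx hz hp)
  refine ⟨fun x hx => ?_, fun z hz => ?_⟩
  · have hvx := hv1 x (Ioo_subset_Icc_self hx)
    refine ⟨?_, ?_⟩
    · rw [hbd (Ioo_subset_Icc_self hx) ⟨hvx.le, le_rfl⟩ fun h => lt_irrefl _ h.2.2,
        div_self (by linarith)]
    · rw [hbd (Ioo_subset_Icc_self hx) ⟨le_rfl, hvx.le⟩ fun h => lt_irrefl _ h.2.1]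
      norm_num
  · refine ⟨?_, ?_⟩
    · rw [hbd (left_mem_Icc.2 (by norm_num)) ⟨hz.1.le, hv_wall.1 ▸ hz.2.le⟩
        fun h => lt_irrefl _ h.1.1, hv_wall.1, add_zero, div_one]
    · rw [hbd (right_mem_Icc.2 (by norm_num)) ⟨hz.1.le, hv_wall.2 ▸ hz.2.le⟩
        fun h => lt_irrefl _ h.1.2, hv_wall.2, add_zero, div_one]

end Omega

section SecondDerivative

variable {E V : Type*} [NormedAddCommGroup E] [NormedSpace ℝ E] [NormedAddCommGroup V]
  [NormedSpace ℝ V]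

theorem fderiv_apply_eq_zero_of_eventuallyEq_const {f : E → V} {γ : ℝ → E} {γ' : E} {t : ℝ}
    {c : V} (hf : DifferentiableAt ℝ f (γ t)) (hγ : HasDerivAt γ γ' t)
    (hc : (fun s => f (γ s)) =ᶠ[𝓝 t] fun _ => c) : fderiv ℝ f (γ t) γ' = 0 :=
  (hf.hasFDerivAt.comp_hasDerivAt t hγ).unique ((hasDerivAt_const t c).congr_of_eventuallyEq hc)

variable {f : E → V}

theorem ContDiff.continuous_fderiv_apply_const (hf : ContDiff ℝ 2 f) (v : E) :
    Continuous fun q => fderiv ℝ f q v :=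
  (hf.continuous_fderiv (by norm_num)).clm_apply continuous_const

theorem ContDiff.continuous_fderiv_fderiv_apply_const (hf : ContDiff ℝ 2 f) (v w : E) :
    Continuous fun q => fderiv ℝ (fderiv ℝ f) q v w :=
  (((hf.fderiv_right (m := 1) (by norm_num)).continuous_fderiv one_ne_zero).clm_apply
    continuous_const).clm_apply continuous_const

theorem ContDiff.hasDerivAt_fderiv_apply_comp (hf : ContDiff ℝ 2 f) {γ : ℝ → E} {γ' : E}
    {t : ℝ} (hγ : HasDerivAt γ γ' t) (v : E) :
    HasDerivAt (fun s => fderiv ℝ f (γ s) v) (fderiv ℝ (fderiv ℝ f) (γ t) γ' v) t := by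
  have h := (((hf.fderiv_right (m := 1) (by norm_num)).differentiable one_ne_zero)
    (γ t)).hasFDerivAt.comp_hasDerivAt t hγ
  simpa using h.clm_apply (hasDerivAt_const t v)

theorem ContDiff.fderiv_fderiv_comm (hf : ContDiff ℝ 2 f) (q v w : E) :
    fderiv ℝ (fderiv ℝ f) q v w = fderiv ℝ (fderiv ℝ f) q w v :=
  hf.contDiffAt.isSymmSndFDerivAt (by simp) v w

end SecondDerivative

section EnergyDensity

local notation "e₁" => ((1, 0, 0) : ℝ × ℝ × ℝ)
local notation "e₂" => ((0, 1, 0) : ℝ × ℝ × ℝ)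
local notation "e₃" => ((0, 0, 1) : ℝ × ℝ × ℝ)

theorem hasDerivAt_triple_fst (x z t : ℝ) : HasDerivAt (fun s => ((s, x, z) : ℝ × ℝ × ℝ)) e₁ t :=
  (hasDerivAt_id t).prodMk ((hasDerivAt_const t x).prodMk (hasDerivAt_const t z))

theorem hasDerivAt_triple_snd (t z x : ℝ) : HasDerivAt (fun y => ((t, y, z) : ℝ × ℝ × ℝ)) e₂ x :=
  (hasDerivAt_const x t).prodMk ((hasDerivAt_id x).prodMk (hasDerivAt_const x z))

theorem hasDerivAt_triple_thd (t x z : ℝ) : HasDerivAt (fun y => ((t, x, y) : ℝ × ℝ × ℝ)) e₃ z :=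
  (hasDerivAt_const z t).prodMk ((hasDerivAt_const z x).prodMk (hasDerivAt_id z))

theorem fderiv_apply_triple_eq_zero_of_eventuallyEq_const {F : ℝ × ℝ × ℝ → ℝ}
    {γ : ℝ → ℝ × ℝ × ℝ} {a b c t κ : ℝ} (hF : DifferentiableAt ℝ F (γ t))
    (hγ : HasDerivAt γ (a, b, c) t) (hκ : (fun s => F (γ s)) =ᶠ[𝓝 t] fun _ => κ) :
    a * fderiv ℝ F (γ t) e₁ + b * fderiv ℝ F (γ t) e₂ + c * fderiv ℝ F (γ t) e₃ = 0 := by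
  have h : ((a, b, c) : ℝ × ℝ × ℝ) = a • e₁ + b • e₂ + c • e₃ := by simp
  have h₀ := fderiv_apply_eq_zero_of_eventuallyEq_const hF hγ hκ
  simpa only [h, map_add, map_smul, smul_eq_mul] using h₀

noncomputable def energyDensity (ε : ℝ) (F : ℝ × ℝ × ℝ → ℝ) (q : ℝ × ℝ × ℝ) : ℝ :=
  ε ^ 2 * fderiv ℝ F q e₂ ^ 2 + fderiv ℝ F q e₃ ^ 2

variable {ε : ℝ} {F : ℝ × ℝ × ℝ → ℝ}

theorem ContDiff.continuous_energyDensity (hF : ContDiff ℝ 2 F) :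
    Continuous (energyDensity ε F) :=
  (continuous_const.mul ((hF.continuous_fderiv_apply_const _).pow 2)).add
    ((hF.continuous_fderiv_apply_const _).pow 2)

theorem ContDiff.hasDerivAt_energyDensity_comp (hF : ContDiff ℝ 2 F) {γ : ℝ → ℝ × ℝ × ℝ}
    {γ' : ℝ × ℝ × ℝ} {t : ℝ} (hγ : HasDerivAt γ γ' t) :
    HasDerivAt (fun s => energyDensity ε F (γ s))
      (2 * ε ^ 2 * fderiv ℝ F (γ t) e₂ * fderiv ℝ (fderiv ℝ F) (γ t) γ' e₂
        + 2 * fderiv ℝ F (γ t) e₃ * fderiv ℝ (fderiv ℝ F) (γ t) γ' e₃) t := by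
  have h₂ := hF.hasDerivAt_fderiv_apply_comp hγ e₂
  have h₃ := hF.hasDerivAt_fderiv_apply_comp hγ e₃
  refine (((h₂.pow 2).const_mul (ε ^ 2)).add (h₃.pow 2)).congr_deriv ?_
  simp only [Nat.cast_ofNat, Nat.add_one_sub_one, pow_one]
  ring

theorem ContDiff.timeDeriv_energyDensity_eq_two_mul_div (hF : ContDiff ℝ 2 F)
    {q : ℝ × ℝ × ℝ}
    (hpde : ε ^ 2 * fderiv ℝ (fderiv ℝ F) q e₂ e₂ + fderiv ℝ (fderiv ℝ F) q e₃ e₃ = 0) :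
    2 * ε ^ 2 * fderiv ℝ F q e₂ * fderiv ℝ (fderiv ℝ F) q e₁ e₂
        + 2 * fderiv ℝ F q e₃ * fderiv ℝ (fderiv ℝ F) q e₁ e₃ =
      2 * ((ε ^ 2 * fderiv ℝ (fderiv ℝ F) q e₂ e₂ * fderiv ℝ F q e₁
          + ε ^ 2 * fderiv ℝ F q e₂ * fderiv ℝ (fderiv ℝ F) q e₂ e₁)
        + (fderiv ℝ (fderiv ℝ F) q e₃ e₃ * fderiv ℝ F q e₁
          + fderiv ℝ F q e₃ * fderiv ℝ (fderiv ℝ F) q e₃ e₁)) := by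
  rw [hF.fderiv_fderiv_comm q e₂ e₁, hF.fderiv_fderiv_comm q e₃ e₁]
  linear_combination (-2 * fderiv ℝ F q e₁) * hpde

theorem integral_integral_timeDeriv_energyDensity (hF : ContDiff ℝ 2 F) {s₀ : ℝ}
    {v v' w : ℝ → ℝ} (hv : ∀ x, HasDerivAt v (v' x) x) (hv' : Continuous v')
    (hv1 : ∀ x ∈ Ioo (-1 : ℝ) 1, -1 < v x) (hv_wall : v (-1) = 0 ∧ v 1 = 0)
    (hpde : ∀ p ∈ Omega v, ε ^ 2 * fderiv ℝ (fderiv ℝ F) (s₀, p.1, p.2) e₂ e₂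
      + fderiv ℝ (fderiv ℝ F) (s₀, p.1, p.2) e₃ e₃ = 0)
    (htop_t : ∀ x ∈ Ioo (-1 : ℝ) 1,
      fderiv ℝ F (s₀, x, v x) e₁ = -w x * fderiv ℝ F (s₀, x, v x) e₃)
    (htop_x : ∀ x ∈ Ioo (-1 : ℝ) 1,
      fderiv ℝ F (s₀, x, v x) e₂ = -v' x * fderiv ℝ F (s₀, x, v x) e₃)
    (hbot : ∀ x ∈ Ioo (-1 : ℝ) 1, fderiv ℝ F (s₀, x, -1) e₁ = 0)
    (hwall : ∀ z ∈ Ioo (-1 : ℝ) 0, fderiv ℝ F (s₀, -1, z) e₁ = 0 ∧ fderiv ℝ F (s₀, 1, z) e₁ = 0) :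
    ∫ x in (-1 : ℝ)..1, ∫ z in (-1 : ℝ)..v x,
      (2 * ε ^ 2 * fderiv ℝ F (s₀, x, z) e₂ * fderiv ℝ (fderiv ℝ F) (s₀, x, z) e₁ e₂
        + 2 * fderiv ℝ F (s₀, x, z) e₃ * fderiv ℝ (fderiv ℝ F) (s₀, x, z) e₁ e₃)
      = -2 * ∫ x in (-1 : ℝ)..1, energyDensity ε F (s₀, x, v x) * w x := by
  set D := fun (x z : ℝ) (e : ℝ × ℝ × ℝ) => fderiv ℝ F (s₀, x, z) e
  set D₂ := fun (x z : ℝ) (e e' : ℝ × ℝ × ℝ) => fderiv ℝ (fderiv ℝ F) (s₀, x, z) e e'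
  have hD (e) : Continuous ↿fun x z => D x z e :=
    (hF.continuous_fderiv_apply_const e).comp (by fun_prop)
  have hD₂ (e e') : Continuous ↿fun x z => D₂ x z e e' :=
    (hF.continuous_fderiv_fderiv_apply_const e e').comp (by fun_prop)
  have hdx (x z e) : HasDerivAt (D · z e) (D₂ x z e₂ e) x :=
    hF.hasDerivAt_fderiv_apply_comp (hasDerivAt_triple_snd s₀ z x) e
  have hdz (x z e) : HasDerivAt (D x · e) (D₂ x z e₃ e) z :=
    hF.hasDerivAt_fderiv_apply_comp (hasDerivAt_triple_thd s₀ x z) e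
  set P := fun x z => ε ^ 2 * D x z e₂ * D x z e₁
  set Q := fun x z => D x z e₃ * D x z e₁
  have hwall_flux (a : ℝ) (ha : ∀ z ∈ Ioo (-1 : ℝ) 0, D a z e₁ = 0) (hva : v a = 0) :
      ∫ z in (-1 : ℝ)..v a, P a z = 0 := by
    rw [hva, intervalIntegral.integral_congr_Ioo_of_le (by norm_num) (g := fun _ => 0)
      fun z hz => by simp only [P, ha z hz, mul_zero], intervalIntegral.integral_zero]
  have htop : ∀ x ∈ Ioo (-1 : ℝ) 1, Q x (v x) - Q x (-1) - P x (v x) * v' x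
      = -(energyDensity ε F (s₀, x, v x) * w x) := by
    intro x hx
    simp only [P, Q, D, energyDensity, hbot x hx, htop_t x hx, htop_x x hx]
    ring
  rw [intervalIntegral.integral_congr_Ioo_of_le (by norm_num) fun x hx =>
      intervalIntegral.integral_congr_Ioo_of_le (hv1 x hx).le fun z hz =>
        hF.timeDeriv_energyDensity_eq_two_mul_div (hpde (x, z) ⟨hx, hz⟩)]
  simp only [intervalIntegral.integral_const_mul]
  rw [integral_integral_subgraph_divergence (P := P) (Q := Q)
      ((continuous_const.mul (hD e₂)).mul (hD e₁))
      (((continuous_const.mul (hD₂ e₂ e₂)).mul (hD e₁)).add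
        ((continuous_const.mul (hD e₂)).mul (hD₂ e₂ e₁)))
      ((hD e₃).mul (hD e₁))
      (((hD₂ e₃ e₃).mul (hD e₁)).add ((hD e₃).mul (hD₂ e₃ e₁)))
      (fun x z => (((hdx x z e₂).const_mul (ε ^ 2)).mul (hdx x z e₁)).congr_deriv (by ring))
      (fun x z => ((hdz x z e₃).mul (hdz x z e₁)).congr_deriv (by ring)) hv hv',
    hwall_flux 1 (fun z hz => (hwall z hz).2) hv_wall.2,
    hwall_flux (-1) (fun z hz => (hwall z hz).1) hv_wall.1,
    intervalIntegral.integral_congr_Ioo_of_le (by norm_num) htop, intervalIntegral.integral_neg]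
  ring

theorem hasDerivAt_integral_integral_energyDensity (hF : ContDiff ℝ 2 F) {u u' : ℝ → ℝ → ℝ}
    (hu : Continuous ↿u) (hu' : Continuous ↿u') (hut : ∀ t x, HasDerivAt (u · x) (u' t x) t)
    {s₀ : ℝ} (hux : ContDiff ℝ 1 (u s₀)) (hu_gt : ∀ x ∈ Ioo (-1 : ℝ) 1, -1 < u s₀ x)
    (hu_wall : u s₀ (-1) = 0 ∧ u s₀ 1 = 0)
    (hpde : ∀ p ∈ Omega (u s₀), ε ^ 2 * fderiv ℝ (fderiv ℝ F) (s₀, p.1, p.2) e₂ e₂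
      + fderiv ℝ (fderiv ℝ F) (s₀, p.1, p.2) e₃ e₃ = 0)
    (hbv : ∀ᶠ s in 𝓝 s₀, (∀ x ∈ Ioo (-1 : ℝ) 1, F (s, x, u s x) = 1 ∧ F (s, x, -1) = 0) ∧
      ∀ z ∈ Ioo (-1 : ℝ) 0, F (s, -1, z) = 1 + z ∧ F (s, 1, z) = 1 + z) :
    HasDerivAt (fun t => ∫ x in (-1 : ℝ)..1, ∫ z in (-1 : ℝ)..u t x, energyDensity ε F (t, x, z))
      (-∫ x in (-1 : ℝ)..1, energyDensity ε F (s₀, x, u s₀ x) * u' s₀ x) s₀ := by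
  have hFd (q) : DifferentiableAt ℝ F q := hF.differentiable (by norm_num) q
  have hux' (x) : HasDerivAt (u s₀) (deriv (u s₀) x) x :=
    (hux.differentiable one_ne_zero x).hasDerivAt
  -- `F` is locally constant along the boundary curves, so its derivative along them vanishes
  have htop_t : ∀ x ∈ Ioo (-1 : ℝ) 1,
      fderiv ℝ F (s₀, x, u s₀ x) e₁ = -u' s₀ x * fderiv ℝ F (s₀, x, u s₀ x) e₃ := fun x hx => by
    linear_combination fderiv_apply_triple_eq_zero_of_eventuallyEq_const (hFd _)
      ((hasDerivAt_id' s₀).prodMk ((hasDerivAt_const s₀ x).prodMk (hut s₀ x)))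
      (hbv.mono fun s hs => (hs.1 x hx).1)
  have htop_x : ∀ x ∈ Ioo (-1 : ℝ) 1,
      fderiv ℝ F (s₀, x, u s₀ x) e₂ = -deriv (u s₀) x * fderiv ℝ F (s₀, x, u s₀ x) e₃ :=
    fun x hx => by
    linear_combination fderiv_apply_triple_eq_zero_of_eventuallyEq_const (hFd _)
      ((hasDerivAt_const x s₀).prodMk ((hasDerivAt_id' x).prodMk (hux' x)))
      (eventually_of_mem (isOpen_Ioo.mem_nhds hx) fun x' hx' => (hbv.self_of_nhds.1 x' hx').1)
  have hbot : ∀ x ∈ Ioo (-1 : ℝ) 1, fderiv ℝ F (s₀, x, -1) e₁ = 0 := fun x hx =>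
    fderiv_apply_eq_zero_of_eventuallyEq_const (hFd _) (hasDerivAt_triple_fst x (-1) s₀)
      (hbv.mono fun s hs => (hs.1 x hx).2)
  have hwall : ∀ z ∈ Ioo (-1 : ℝ) 0,
      fderiv ℝ F (s₀, -1, z) e₁ = 0 ∧ fderiv ℝ F (s₀, 1, z) e₁ = 0 := fun z hz =>
    ⟨fderiv_apply_eq_zero_of_eventuallyEq_const (hFd _) (hasDerivAt_triple_fst (-1) z s₀)
      (hbv.mono fun s hs => (hs.2 z hz).1),
    fderiv_apply_eq_zero_of_eventuallyEq_const (hFd _) (hasDerivAt_triple_fst 1 z s₀)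
      (hbv.mono fun s hs => (hs.2 z hz).2)⟩
  have hg' : Continuous fun q => 2 * ε ^ 2 * fderiv ℝ F q e₂ * fderiv ℝ (fderiv ℝ F) q e₁ e₂
      + 2 * fderiv ℝ F q e₃ * fderiv ℝ (fderiv ℝ F) q e₁ e₃ := by
    have := hF.continuous_fderiv_apply_const
    have := hF.continuous_fderiv_fderiv_apply_const
    fun_prop
  refine (hasDerivAt_integral_integral_subgraph hF.continuous_energyDensity hg'
    (fun t x z => hF.hasDerivAt_energyDensity_comp (hasDerivAt_triple_fst x z t)) hu hu' hut
    _ _ _ _).congr_deriv ?_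
  rw [integral_integral_timeDeriv_energyDensity hF hux' (hux.continuous_deriv le_rfl) hu_gt
    hu_wall hpde htop_t htop_x hbot hwall]
  ring

section Potential

variable {Ψ : ℝ → ℝ → ℝ → ℝ}

theorem pdx_eq_fderiv (hΨ : Differentiable ℝ fun q : ℝ × ℝ × ℝ => Ψ q.1 q.2.1 q.2.2)
    (t x z : ℝ) :
    pdx (Ψ t) x z = fderiv ℝ (fun q : ℝ × ℝ × ℝ => Ψ q.1 q.2.1 q.2.2) (t, x, z) e₂ :=
  ((hΨ _).hasFDerivAt.comp_hasDerivAt x (hasDerivAt_triple_snd t z x)).deriv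

theorem pdz_eq_fderiv (hΨ : Differentiable ℝ fun q : ℝ × ℝ × ℝ => Ψ q.1 q.2.1 q.2.2)
    (t x z : ℝ) :
    pdz (Ψ t) x z = fderiv ℝ (fun q : ℝ × ℝ × ℝ => Ψ q.1 q.2.1 q.2.2) (t, x, z) e₃ :=
  ((hΨ _).hasFDerivAt.comp_hasDerivAt z (hasDerivAt_triple_thd t x z)).deriv

theorem pdx_pdx_eq_fderiv_fderiv (hΨ : ContDiff ℝ 2 fun q : ℝ × ℝ × ℝ => Ψ q.1 q.2.1 q.2.2)
    (t x z : ℝ) : pdx (fun x z => pdx (Ψ t) x z) x z =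
      fderiv ℝ (fderiv ℝ fun q : ℝ × ℝ × ℝ => Ψ q.1 q.2.1 q.2.2) (t, x, z) e₂ e₂ := by
  change deriv (fun x' => pdx (Ψ t) x' z) x = _
  simp only [pdx_eq_fderiv (hΨ.differentiable (by norm_num))]
  exact (hΨ.hasDerivAt_fderiv_apply_comp (hasDerivAt_triple_snd t z x) e₂).deriv

theorem pdz_pdz_eq_fderiv_fderiv (hΨ : ContDiff ℝ 2 fun q : ℝ × ℝ × ℝ => Ψ q.1 q.2.1 q.2.2)
    (t x z : ℝ) : pdz (fun x z => pdz (Ψ t) x z) x z =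
      fderiv ℝ (fderiv ℝ fun q : ℝ × ℝ × ℝ => Ψ q.1 q.2.1 q.2.2) (t, x, z) e₃ e₃ := by
  change deriv (fun z' => pdz (Ψ t) x z') z = _
  simp only [pdz_eq_fderiv (hΨ.differentiable (by norm_num))]
  exact (hΨ.hasDerivAt_fderiv_apply_comp (hasDerivAt_triple_thd t x z) e₃).deriv

theorem Ee_eq_integral_integral_energyDensity
    (hΨ : ContDiff ℝ 2 fun q : ℝ × ℝ × ℝ => Ψ q.1 q.2.1 q.2.2) {v : ℝ → ℝ} (hv : Continuous v)
    (hv1 : ∀ x ∈ Ioo (-1 : ℝ) 1, -1 ≤ v x) (t : ℝ) :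
    Ee ε v (Ψ t) = ∫ x in (-1 : ℝ)..1, ∫ z in (-1 : ℝ)..v x,
      energyDensity ε (fun q : ℝ × ℝ × ℝ => Ψ q.1 q.2.1 q.2.2) (t, x, z) := by
  simp only [Ee, pdx_eq_fderiv (hΨ.differentiable (by norm_num)),
    pdz_eq_fderiv (hΨ.differentiable (by norm_num))]
  exact setIntegral_Omega hv hv1 (hΨ.continuous_energyDensity.comp (by fun_prop))

end Potential

end EnergyDensity

theorem stmt_13_general
    (ε T : ℝ)
    (ubar : ℝ → ℝ → ℝ)
    -- existence of ∂t ū, ∂x ū, ∂x² ū mixed smoothness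
    (h_t : ∀ x : ℝ, Differentiable ℝ fun s => ubar s x)
    (h_x : ∀ t : ℝ, ContDiff ℝ 2 (ubar t))
    -- joint continuity of ū, ∂t ū, ∂x ū, ∂x² ū, ∂t ∂x ū
    (hc : Continuous fun p : ℝ × ℝ => ubar p.1 p.2)
    (hc_t : Continuous fun p : ℝ × ℝ => deriv (fun s => ubar s p.2) p.1)
    -- clamped boundary conditions and lower bound
    (hbc : ∀ t ∈ Icc (0 : ℝ) T,
      ubar t (-1) = 0 ∧ ubar t 1 = 0 ∧ deriv (ubar t) (-1) = 0 ∧ deriv (ubar t) 1 = 0)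
    (hgt : ∀ t ∈ Icc (0 : ℝ) T, ∀ x ∈ Icc (-1 : ℝ) 1, -1 < ubar t x)
    -- the potential, C² on a neighborhood of the moving domain
    (Ψ : ℝ → ℝ → ℝ → ℝ)
    (hΨ : ContDiff ℝ 2 fun q : ℝ × ℝ × ℝ => Ψ q.1 q.2.1 q.2.2)
    (hΨ_pde : ∀ t ∈ Icc (0 : ℝ) T, ∀ p ∈ Omega (ubar t),
      ε ^ 2 * pdx (fun x z => pdx (Ψ t) x z) p.1 p.2
        + pdz (fun x z => pdz (Ψ t) x z) p.1 p.2 = 0)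
    (hΨ_bc : ∀ t ∈ Icc (0 : ℝ) T, ∀ p ∈ frontier (Omega (ubar t)),
      Ψ t p.1 p.2 = (1 + p.2) / (1 + ubar t p.1)) :
    ∀ t₁ t₂ : ℝ, 0 ≤ t₁ → t₁ ≤ t₂ → t₂ ≤ T →
      Ee ε (ubar t₂) (Ψ t₂) - Ee ε (ubar t₁) (Ψ t₁) =
        - ∫ s in t₁..t₂, ∫ x in (-1 : ℝ)..1,
            (ε ^ 2 * (pdx (Ψ s) x (ubar s x)) ^ 2
              + (pdz (Ψ s) x (ubar s x)) ^ 2) * deriv (fun σ => ubar σ x) s := by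
  intro t₁ t₂ ht₁ h₁₂ ht₂
  have hwall {s} (hs : s ∈ Icc 0 T) : ubar s (-1) = 0 ∧ ubar s 1 = 0 :=
    ⟨(hbc s hs).1, (hbc s hs).2.1⟩
  have hE {t} (ht : t ∈ Icc 0 T) := Ee_eq_integral_integral_energyDensity (ε := ε) hΨ
    (h_x t).continuous (fun x hx => (hgt t ht x (Ioo_subset_Icc_self hx)).le) t
  have hderiv {s} (hs : s ∈ Ioo 0 T) :=
    have hs' := Ioo_subset_Icc_self hs
    hasDerivAt_integral_integral_energyDensity (ε := ε) hΨ hc hc_t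
      (fun t x => (h_t x t).hasDerivAt) ((h_x s).of_le one_le_two)
      (fun x hx => hgt s hs' x (Ioo_subset_Icc_self hx)) (hwall hs')
      (fun p hp => by
        simpa only [pdx_pdx_eq_fderiv_fderiv hΨ, pdz_pdz_eq_fderiv_fderiv hΨ] using
          hΨ_pde s hs' p hp)
      (eventually_of_mem (isOpen_Ioo.mem_nhds hs) fun σ hσ =>
        boundary_values_of_frontier_Omega (φ := Ψ σ) (h_x σ).continuous
          (hgt σ (Ioo_subset_Icc_self hσ)) (hwall (Ioo_subset_Icc_self hσ))
          (hΨ_bc σ (Ioo_subset_Icc_self hσ)))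
  have hflux : Continuous fun s => -∫ x in (-1 : ℝ)..1,
      energyDensity ε (fun q : ℝ × ℝ × ℝ => Ψ q.1 q.2.1 q.2.2) (s, x, ubar s x)
        * deriv (fun σ => ubar σ x) s := by
    have := hΨ.continuous_energyDensity (ε := ε)
    fun_prop
  rw [hE ⟨ht₁.trans h₁₂, ht₂⟩, hE ⟨ht₁, h₁₂.trans ht₂⟩,
    ← intervalIntegral.integral_eq_sub_of_hasDerivAt_of_le h₁₂
      (continuous_integral_integral_subgraph hΨ.continuous_energyDensity hc _ _ _).continuousOn
      (fun s hs => hderiv ⟨ht₁.trans_lt hs.1, hs.2.trans_le ht₂⟩)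
      (hflux.intervalIntegrable _ _),
    ← intervalIntegral.integral_neg]
  simp only [pdx_eq_fderiv (hΨ.differentiable (by norm_num)),
    pdz_eq_fderiv (hΨ.differentiable (by norm_num)), energyDensity]

/-- Shape derivative formula for the electrostatic energy on the
moving domain `Ω(ū(t,·))`. -/
theorem stmt_13
    (ε T : ℝ) (hε : 0 < ε) (hT : 0 < T)
    (ubar : ℝ → ℝ → ℝ)
    -- existence of ∂t ū, ∂x ū, ∂x² ū mixed smoothness
    (h_t : ∀ x : ℝ, Differentiable ℝ fun s => ubar s x)
    (h_x : ∀ t : ℝ, ContDiff ℝ 2 (ubar t))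
    (h_tx : ∀ x : ℝ, Differentiable ℝ fun s => deriv (ubar s) x)
    -- joint continuity of ū, ∂t ū, ∂x ū, ∂x² ū, ∂t ∂x ū
    (hc : Continuous fun p : ℝ × ℝ => ubar p.1 p.2)
    (hc_t : Continuous fun p : ℝ × ℝ => deriv (fun s => ubar s p.2) p.1)
    (hc_x : Continuous fun p : ℝ × ℝ => deriv (ubar p.1) p.2)
    (hc_xx : Continuous fun p : ℝ × ℝ => iteratedDeriv 2 (ubar p.1) p.2)
    (hc_tx : Continuous fun p : ℝ × ℝ => deriv (fun s => deriv (ubar s) p.2) p.1)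
    -- clamped boundary conditions and lower bound
    (hbc : ∀ t ∈ Icc (0 : ℝ) T,
      ubar t (-1) = 0 ∧ ubar t 1 = 0 ∧ deriv (ubar t) (-1) = 0 ∧ deriv (ubar t) 1 = 0)
    (hgt : ∀ t ∈ Icc (0 : ℝ) T, ∀ x ∈ Icc (-1 : ℝ) 1, -1 < ubar t x)
    -- the potential, C² on a neighborhood of the moving domain
    (Ψ : ℝ → ℝ → ℝ → ℝ)
    (hΨ : ContDiff ℝ 2 fun q : ℝ × ℝ × ℝ => Ψ q.1 q.2.1 q.2.2)
    (hΨ_pde : ∀ t ∈ Icc (0 : ℝ) T, ∀ p ∈ Omega (ubar t),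
      ε ^ 2 * pdx (fun x z => pdx (Ψ t) x z) p.1 p.2
        + pdz (fun x z => pdz (Ψ t) x z) p.1 p.2 = 0)
    (hΨ_bc : ∀ t ∈ Icc (0 : ℝ) T, ∀ p ∈ frontier (Omega (ubar t)),
      Ψ t p.1 p.2 = (1 + p.2) / (1 + ubar t p.1)) :
    ∀ t₁ t₂ : ℝ, 0 ≤ t₁ → t₁ ≤ t₂ → t₂ ≤ T →
      Ee ε (ubar t₂) (Ψ t₂) - Ee ε (ubar t₁) (Ψ t₁) =
        - ∫ s in t₁..t₂, ∫ x in (-1 : ℝ)..1,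
            (ε ^ 2 * (pdx (Ψ s) x (ubar s x)) ^ 2
              + (pdz (Ψ s) x (ubar s x)) ^ 2) * deriv (fun σ => ubar σ x) s :=
  stmt_13_general ε T ubar h_t h_x hc hc_t hbc hgt Ψ hΨ hΨ_pde hΨ_bc
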